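/- (Soundness and tightness of Simul-CROWN for linear classifiers, case ŷ = 0.) Let x, x' ∈ ℝⁿ, let l, u ∈ ℝⁿ with lᵢ ≤ uᵢ, and b̲ ≤ b̄ ∈ ℝ define the parameter box B = [l,u] × [b̲, b̄]. Assume the set Δ = {(w,b) ∈ B : w·x + b ≤ 0} is nonempty. Let t = inf{w·x' + b : (w,b) ∈ Δ} (the Simul-CROWN value) and L = Σᵢ min(lᵢ·x'ᵢ, uᵢ·x'ᵢ) + b̲ (the IBP/CROWN-IBP value). Then sup{(σ(w·x' + b) − 1)² : (w,b) ∈ Δ} ≤ (σ(t) − 1)² ≤ (σ(L) − 1)². -/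

import Mathlib

noncomputable def sigmoid (t : ℝ) : ℝ := 1 / (1 + Real.exp (-t))

/-!
The score `w·x' + b` of every parameter in `Δ` is at least its infimum `t`, and `t` is at least
the interval-arithmetic bound `L`, which bounds the score over the whole box `B ⊇ Δ`. Since
`(σ s - 1)²` is antitone in the score `s`, both inequalities follow.
-/

theorem sigmoid_eq_real_sigmoid : sigmoid = Real.sigmoid := by
  funext t
  rw [sigmoid, Real.sigmoid_def, one_div]

theorem antitone_sigmoid_sub_one_sq : Antitone fun t => (sigmoid t - 1) ^ 2 := by
  intro a b hab
  simp only [sigmoid_eq_real_sigmoid, ← neg_sub (1 : ℝ), neg_sq]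
  exact pow_le_pow_left₀ (sub_nonneg.2 (Real.sigmoid_le_one b))
    (sub_le_sub_left (Real.sigmoid_le hab) 1) 2

theorem min_mul_le_mul_of_mem_Icc {lo up w c : ℝ} (hlo : lo ≤ w) (hup : w ≤ up) :
    min (lo * c) (up * c) ≤ w * c := by
  rcases le_total 0 c with hc | hc
  · exact (min_le_left _ _).trans (mul_le_mul_of_nonneg_right hlo hc)
  · exact (min_le_right _ _).trans (mul_le_mul_of_nonpos_right hup hc)

theorem Finset.sum_min_mul_le_sum_mul {ι : Type*} (s : Finset ι) {l u w c : ι → ℝ}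
    (hw : ∀ i, l i ≤ w i ∧ w i ≤ u i) :
    ∑ i ∈ s, min (l i * c i) (u i * c i) ≤ ∑ i ∈ s, w i * c i :=
  Finset.sum_le_sum fun i _ => min_mul_le_mul_of_mem_Icc (hw i).1 (hw i).2

theorem simulCROWN_sound_tight_y0_general (n : ℕ) (x x' l u : Fin n → ℝ) (bl bu : ℝ)
    (hne : ∃ (w : Fin n → ℝ) (b : ℝ), (∀ i, l i ≤ w i ∧ w i ≤ u i) ∧
      bl ≤ b ∧ b ≤ bu ∧ (∑ i, w i * x i) + b ≤ 0)
    (t L : ℝ)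
    (ht : t = sInf {v : ℝ | ∃ (w : Fin n → ℝ) (b : ℝ),
      (∀ i, l i ≤ w i ∧ w i ≤ u i) ∧ bl ≤ b ∧ b ≤ bu ∧
      (∑ i, w i * x i) + b ≤ 0 ∧ v = (∑ i, w i * x' i) + b})
    (hL : L = (∑ i, min (l i * x' i) (u i * x' i)) + bl) :
    sSup {v : ℝ | ∃ (w : Fin n → ℝ) (b : ℝ),
        (∀ i, l i ≤ w i ∧ w i ≤ u i) ∧ bl ≤ b ∧ b ≤ bu ∧
        (∑ i, w i * x i) + b ≤ 0 ∧
        v = (sigmoid ((∑ i, w i * x' i) + b) - 1) ^ 2} ≤ (sigmoid t - 1) ^ 2 ∧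
      (sigmoid t - 1) ^ 2 ≤ (sigmoid L - 1) ^ 2 := by
  set scores := {v : ℝ | ∃ (w : Fin n → ℝ) (b : ℝ),
      (∀ i, l i ≤ w i ∧ w i ≤ u i) ∧ bl ≤ b ∧ b ≤ bu ∧
      (∑ i, w i * x i) + b ≤ 0 ∧ v = (∑ i, w i * x' i) + b}
  have hL_le : ∀ v ∈ scores, L ≤ v := by
    rintro _ ⟨w, b, hw, hbl, -, -, rfl⟩
    exact hL ▸ add_le_add (Finset.univ.sum_min_mul_le_sum_mul hw) hbl
  obtain ⟨w₀, b₀, hw₀, hbl₀, hbu₀, hx₀⟩ := hne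
  constructor
  · refine csSup_le ⟨_, w₀, b₀, hw₀, hbl₀, hbu₀, hx₀, rfl⟩ ?_
    rintro _ ⟨w, b, hw, hbl, hbu, hx, rfl⟩
    exact antitone_sigmoid_sub_one_sq (ht ▸ csInf_le ⟨L, hL_le⟩ ⟨w, b, hw, hbl, hbu, hx, rfl⟩)
  · exact antitone_sigmoid_sub_one_sq
      (ht ▸ le_csInf ⟨_, w₀, b₀, hw₀, hbl₀, hbu₀, hx₀, rfl⟩ hL_le)

/-- Soundness and tightness of Simul-CROWN for linear classifiers, case ŷ = 0:
the Simul-CROWN overapproximated robust loss `(σ t − 1)²` upper-bounds the true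
robust counterfactual loss over the prediction-preserving multiplicity set `Δ`
and lower-bounds the IBP/CROWN-IBP overapproximated loss `(σ L − 1)²`. -/
theorem simulCROWN_sound_tight_y0 (n : ℕ) (x x' l u : Fin n → ℝ) (bl bu : ℝ)
    (hlu : ∀ i, l i ≤ u i) (hb : bl ≤ bu)
    (hne : ∃ (w : Fin n → ℝ) (b : ℝ), (∀ i, l i ≤ w i ∧ w i ≤ u i) ∧
      bl ≤ b ∧ b ≤ bu ∧ (∑ i, w i * x i) + b ≤ 0)
    (t L : ℝ)
    (ht : t = sInf {v : ℝ | ∃ (w : Fin n → ℝ) (b : ℝ),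
      (∀ i, l i ≤ w i ∧ w i ≤ u i) ∧ bl ≤ b ∧ b ≤ bu ∧
      (∑ i, w i * x i) + b ≤ 0 ∧ v = (∑ i, w i * x' i) + b})
    (hL : L = (∑ i, min (l i * x' i) (u i * x' i)) + bl) :
    sSup {v : ℝ | ∃ (w : Fin n → ℝ) (b : ℝ),
        (∀ i, l i ≤ w i ∧ w i ≤ u i) ∧ bl ≤ b ∧ b ≤ bu ∧
        (∑ i, w i * x i) + b ≤ 0 ∧
        v = (sigmoid ((∑ i, w i * x' i) + b) - 1) ^ 2} ≤ (sigmoid t - 1) ^ 2 ∧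
      (sigmoid t - 1) ^ 2 ≤ (sigmoid L - 1) ^ 2 :=
  simulCROWN_sound_tight_y0_general n x x' l u bl bu hne t L ht hL
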